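/- (Diaconis–Freedman bound recovered) For every k ≥ 2 there exists a constant B_k, depending only on k, with the following property: for every Polish space X, every N ≥ k, and every N-representable k-plan μ_k ∈ 𝒫_{N-rep}(X^k), there exists a Borel probability measure α on 𝒫(X) such that ‖ μ_k − ∫_{𝒫(X)} λ^{⊗k} dα(λ) ‖_TV ≤ B_k / N, where the measure ∫ λ^{⊗k} dα is defined setwise by A ↦ ∫_{𝒫(X)} λ^{⊗k}(A) dα(λ). -/

import Mathlib

open MeasureTheory Filter Topology ENNReal

noncomputable section

namespace FiniteDeFinetti

variable {X : Type*}

/-- The symmetrization `S_N γ := (1/N!) ∑_{σ ∈ S_N} γ^σ` of a measure on `X^N`,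
where `γ^σ` is the pushforward of `γ` under the coordinate permutation induced by `σ`. -/
def symmetrize [MeasurableSpace X] (N : ℕ) (γ : Measure (Fin N → X)) :
    Measure (Fin N → X) :=
  (N.factorial : ℝ≥0∞)⁻¹ • ∑ σ : Equiv.Perm (Fin N), γ.map (fun x i => x (σ i))

/-- The `k`-point marginal `M_k γ` of a measure on `X^N` (projection on the first `k` coords). -/
def marginal [MeasurableSpace X] {k N : ℕ} (h : k ≤ N) (γ : Measure (Fin N → X)) :
    Measure (Fin k → X) :=
  γ.map (fun x i => x (Fin.castLE h i))

/-- `𝒫_sym(X^N)`: symmetric probability measures on `X^N`. -/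
def PsymSet [MeasurableSpace X] (N : ℕ) : Set (Measure (Fin N → X)) :=
  {γ | IsProbabilityMeasure γ ∧ γ = symmetrize N γ}

/-- `𝒫_{N-rep}(X^k)`: the `N`-representable `k`-plans. -/
def NRep [MeasurableSpace X] {k N : ℕ} (h : k ≤ N) : Set (Measure (Fin k → X)) :=
  {μ | ∃ γ : Measure (Fin N → X), γ ∈ PsymSet N ∧ μ = marginal h γ}

/-- Narrow (weak) convergence of a sequence of measures: convergence of integrals of all
bounded continuous functions. -/
def NarrowTendsto {Y : Type*} [MeasurableSpace Y] [TopologicalSpace Y]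
    (μs : ℕ → Measure Y) (μ : Measure Y) : Prop :=
  ∀ φ : BoundedContinuousFunction Y ℝ,
    Tendsto (fun n => ∫ y, φ y ∂(μs n)) atTop (𝓝 (∫ y, φ y ∂μ))

/-- The empirical measure `(1/N) ∑ δ_{x_i}`. -/
def empirical [MeasurableSpace X] (N : ℕ) (x : Fin N → X) : Measure X :=
  (N : ℝ≥0∞)⁻¹ • ∑ i, Measure.dirac (x i)

/-- Extreme point of a convex set of measures. -/
def IsExtremePt {Y : Type*} [MeasurableSpace Y] (C : Set (Measure Y)) (μ : Measure Y) : Prop :=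
  μ ∈ C ∧ ∀ μ1 ∈ C, ∀ μ2 ∈ C, ∀ t : ℝ≥0∞, 0 < t → t < 1 →
    μ = t • μ1 + (1 - t) • μ2 → μ1 = μ ∧ μ2 = μ

/-- The set `E_{N,k}` of marginals of symmetrized Dirac measures. -/
def ENk [MeasurableSpace X] {k N : ℕ} (h : k ≤ N) : Set (Measure (Fin k → X)) :=
  {μ | ∃ x : Fin N → X, μ = marginal h (symmetrize N (Measure.dirac x))}

/-- Borel σ-algebra on the space of probability measures with its narrow topology. -/
instance instMSPM {Y : Type*} [MeasurableSpace Y] [TopologicalSpace Y]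
    [OpensMeasurableSpace Y] : MeasurableSpace (ProbabilityMeasure Y) := borel _

lemma empirical_isProbabilityMeasure [MeasurableSpace X] {N : ℕ} (hN : 0 < N) (x : Fin N → X) :
    IsProbabilityMeasure (empirical N x) := by
  constructor
  simp only [empirical, Measure.smul_apply, smul_eq_mul]
  rw [Measure.finset_sum_apply]
  simp only [measure_univ, Finset.sum_const, Finset.card_univ, Fintype.card_fin, nsmul_eq_mul,
    mul_one]
  exact ENNReal.inv_mul_cancel (by exact_mod_cast hN.ne') (natCast_ne_top N)

/-- The empirical-measure map `Λ : X^N → 𝒫(X)`. -/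
def empPM [MeasurableSpace X] {N : ℕ} (hN : 0 < N) (x : Fin N → X) : ProbabilityMeasure X :=
  ⟨empirical N x, empirical_isProbabilityMeasure hN x⟩

/-- The set `𝒫_{1/N}(X)` of `1/N`-quantized probability measures (as probability measures). -/
def QuantizedPM [MeasurableSpace X] (N : ℕ) : Set (ProbabilityMeasure X) :=
  {lam | ∃ x : Fin N → X, (lam : Measure X) = empirical N x}

open Classical in
/-- The extremal `N`-representable `k`-plan `F_{N,k}(λ)` associated with a `1/N`-quantized
probability measure `λ = (1/N) ∑ δ_{x_i}`, namely `M_k S_N δ_{(x_1,…,x_N)}` (this does not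
depend on the chosen enumeration of the atoms of `λ` counted with multiplicity); junk value
`λ^{⊗k}` for non-quantized `λ`. -/
def FNk [MeasurableSpace X] {k N : ℕ} (h : k ≤ N) (lam : ProbabilityMeasure X) :
    Measure (Fin k → X) :=
  if hx : ∃ x : Fin N → X, (lam : Measure X) = empirical N x then
    marginal h (symmetrize N (Measure.dirac (Classical.choose hx)))
  else Measure.pi fun _ => (lam : Measure X)

end FiniteDeFinetti

/-!
Take `α` to be the law of the empirical measure `(1/N) ∑ δ_{x_i}` of `x ∼ γ`, where `γ` is the
symmetric measure on `X^N` with marginal `μ_k`. Expanding `(1/N ∑ δ_{x_i})^{⊗k}` shows that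
`∫ λ^{⊗k}(A) dα` is the average of `γ(x ∘ j ∈ A)` over all `N^k` maps `j : [k] → [N]`, while by
symmetry `μ_k(A)` is the average of the same quantities over the `N (N-1) ⋯ (N-k+1)` injective
maps. Two averages of `[0,1]`-valued quantities over a set and a subset of relative size `ρ`
differ by at most `1 - ρ`, and `1 - N (N-1) ⋯ (N-k+1) / N^k ≤ k (k-1) / N` by Bernoulli's
inequality.
-/

open Finset
open scoped BigOperators

theorem Finset.abs_expect_sub_expect_le_of_subset {ι : Type*} {s t : Finset ι} (hst : s ⊆ t)
    {f : ι → ℝ} (hf : ∀ i ∈ t, f i ∈ Set.Icc (0 : ℝ) 1) :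
    |𝔼 i ∈ s, f i - 𝔼 i ∈ t, f i| ≤ 1 - #s / #t := by
  classical
  obtain rfl | hs := s.eq_empty_or_nonempty
  · have hle : 𝔼 i ∈ t, f i ≤ 1 := t.eq_empty_or_nonempty.elim (fun ht => by simp [ht])
      fun ht => expect_le ht fun i hi => (hf i hi).2
    simpa [abs_of_nonneg (expect_nonneg fun i hi => (hf i hi).1)] using hle
  -- with `a, b` the sums of `f` over `s` and `t \ s`, both `a (#t - #s)` and `b #s` lie in
  -- `[0, #s (#t - #s)]`
  set a := ∑ i ∈ s, f i
  set b := ∑ i ∈ t \ s, f i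
  have hm : (0 : ℝ) < #s := by exact_mod_cast hs.card_pos
  have hmn : (#s : ℝ) ≤ #t := by exact_mod_cast card_le_card hst
  have hn : (0 : ℝ) < #t := hm.trans_le hmn
  have ha : a ∈ Set.Icc 0 (#s : ℝ) := ⟨sum_nonneg fun i hi => (hf i (hst hi)).1,
    (sum_le_card_nsmul _ _ 1 fun i hi => (hf i (hst hi)).2).trans_eq (by simp)⟩
  have hb : b ∈ Set.Icc 0 ((#t : ℝ) - #s) := ⟨sum_nonneg fun i hi => (hf i (sdiff_subset hi)).1,
    (sum_le_card_nsmul _ _ 1 fun i hi => (hf i (sdiff_subset hi)).2).trans_eq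
      (by simp [card_sdiff_of_subset hst, Nat.cast_sub (card_le_card hst)])⟩
  have key : 𝔼 i ∈ s, f i - 𝔼 i ∈ t, f i = (a * (#t - #s) - b * #s) / (#s * #t) := by
    rw [expect_eq_sum_div_card, expect_eq_sum_div_card, ← sum_sdiff hst]
    field_simp
    ring
  rw [key, abs_div, abs_of_pos (mul_pos hm hn), div_le_iff₀ (mul_pos hm hn)]
  calc |a * (#t - #s) - b * #s| ≤ #s * (#t - #s) :=
        abs_sub_le_of_nonneg_of_le (by nlinarith [ha.1]) (by nlinarith [ha.2])
          (by nlinarith [hb.1]) (by nlinarith [hb.2])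
    _ = (1 - #s / #t) * (#s * #t) := by field_simp

theorem Nat.one_sub_descFactorial_div_pow_le {N k : ℕ} (h : k ≤ N) :
    1 - (N.descFactorial k : ℝ) / N ^ k ≤ k * (k - 1) / N := by
  obtain rfl | hN := N.eq_zero_or_pos
  · obtain rfl : k = 0 := by omega
    simp
  have hN' : (0 : ℝ) < N := by exact_mod_cast hN
  have hk : (k : ℝ) ≤ N := by exact_mod_cast h
  -- Bernoulli's inequality applied to `N.descFactorial k ≥ (N + 1 - k) ^ k`
  have hlow : ((N + 1 - k : ℕ) : ℝ) ^ k ≤ N.descFactorial k := by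
    exact_mod_cast Nat.pow_sub_le_descFactorial N k
  have hbern : 1 + k * ((1 - k) / N : ℝ) ≤ (1 + (1 - k) / N) ^ k :=
    one_add_mul_le_pow (by rw [le_div_iff₀ hN']; linarith) k
  rw [Nat.cast_sub (by omega), Nat.cast_add_one] at hlow
  rw [show (1 + (1 - k) / N : ℝ) = (N + 1 - k) / N by field_simp; ring, div_pow] at hbern
  rw [sub_le_comm]
  calc (1 : ℝ) - k * (k - 1) / N = 1 + k * ((1 - k) / N) := by ring
    _ ≤ _ := hbern
    _ ≤ _ := by gcongr

theorem MulAction.expect_comp_smul_eq_expect {G β M : Type*} [Group G] [Fintype G]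
    [MulAction G β] [Fintype β] [IsPretransitive G β] [AddCommMonoid M] [Module ℚ≥0 M]
    (f : β → M) (b : β) :
    𝔼 g : G, f (g • b) = 𝔼 c : β, f c := by
  have : Nonempty β := ⟨b⟩
  have hconst : ∀ c : β, 𝔼 g : G, f (g • b) = 𝔼 g : G, f (g • c) := by
    intro c
    obtain ⟨h, rfl⟩ := exists_smul_eq G b c
    exact Fintype.expect_equiv (Equiv.mulRight h⁻¹) _ _ fun g => by simp [mul_smul]
  calc 𝔼 g : G, f (g • b) = 𝔼 c : β, 𝔼 g : G, f (g • c) := by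
        simp_rw [← hconst, Fintype.expect_const]
    _ = 𝔼 g : G, 𝔼 c : β, f (g • c) := expect_comm _ _ _
    _ = 𝔼 g : G, 𝔼 c : β, f c := by
        congr! 1 with g
        exact Fintype.expect_equiv (MulAction.toPerm g) _ _ fun _ => rfl
    _ = 𝔼 c : β, f c := Fintype.expect_const _

theorem Measurable.measure_pi {α ι : Type*} [Fintype ι] {Y : ι → Type*} [MeasurableSpace α]
    [∀ i, MeasurableSpace (Y i)] {μ : α → ∀ i, Measure (Y i)}
    [∀ a i, IsProbabilityMeasure (μ a i)] (hμ : ∀ i, Measurable fun a => μ a i) :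
    Measurable fun a => Measure.pi (μ a) := by
  refine .measure_of_isPiSystem_of_isProbabilityMeasure generateFrom_pi.symm isPiSystem_pi ?_
  rintro _ ⟨s, hs, rfl⟩
  simp_rw [Measure.pi_pi]
  exact Finset.measurable_prod _ fun i _ => (Measure.measurable_coe (hs i trivial)).comp (hμ i)

namespace FiniteDeFinetti

section

variable {X : Type*} [MeasurableSpace X]

theorem measureReal_marginal_symmetrize {k N : ℕ} (h : k ≤ N) (γ : Measure (Fin N → X))
    [IsFiniteMeasure γ] {A : Set (Fin k → X)} (hA : MeasurableSet A) :
    (marginal h (symmetrize N γ)).real A =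
      𝔼 j : Fin k ↪ Fin N, γ.real ((fun x => x ∘ j) ⁻¹' A) := by
  have hperm (σ : Equiv.Perm (Fin N)) : Measurable fun x : Fin N → X => fun i => x (σ i) :=
    measurable_pi_lambda _ fun i => measurable_pi_apply _
  have hproj : Measurable fun x : Fin N → X => fun i => x (Fin.castLE h i) :=
    measurable_pi_lambda _ fun i => measurable_pi_apply _
  have := Equiv.Perm.isMultiplyPretransitive (Fin N) k
  rw [← MulAction.expect_comp_smul_eq_expect (G := Equiv.Perm (Fin N)) _ (Fin.castLEEmb h),
    marginal, map_measureReal_apply hproj hA, symmetrize]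
  simp only [measureReal_def, Measure.smul_apply, Measure.finsetSum_apply,
    Measure.map_apply (hperm _) (hproj hA), smul_eq_mul, ENNReal.toReal_mul,
    ENNReal.toReal_sum fun _ _ => measure_ne_top _ _]
  rw [Fintype.expect_eq_sum_div_card, Fintype.card_perm, Fintype.card_fin, div_eq_inv_mul,
    ENNReal.toReal_inv, ENNReal.toReal_natCast]
  rfl

lemma lintegral_empirical {N : ℕ} (x : Fin N → X) {f : X → ℝ≥0∞} (hf : Measurable f) :
    ∫⁻ y, f y ∂(empirical N x) = (N : ℝ≥0∞)⁻¹ * ∑ i, f (x i) := by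
  simp [empirical, lintegral_dirac' _ hf]

lemma pi_empirical (k : ℕ) {N : ℕ} (hN : 0 < N) (x : Fin N → X) :
    Measure.pi (fun _ : Fin k => empirical N x) =
      ((N : ℝ≥0∞) ^ k)⁻¹ • ∑ j : Fin k → Fin N, Measure.dirac (x ∘ j) := by
  have := empirical_isProbabilityMeasure hN x
  refine Measure.pi_eq fun s hs => ?_
  simp only [empirical, Measure.smul_apply, Measure.finsetSum_apply, smul_eq_mul,
    Measure.dirac_apply' _ (hs _), Measure.dirac_apply' _ (MeasurableSet.univ_pi hs)]
  rw [Finset.prod_mul_distrib, Fintype.prod_sum, Finset.prod_const, Finset.card_univ,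
    Fintype.card_fin, ENNReal.inv_pow, ← Finset.coe_univ]
  simp only [Set.indicator_pi_one_apply, Function.comp_apply]

lemma measureReal_pi_empPM {k N : ℕ} (hN : 0 < N) (x : Fin N → X)
    {A : Set (Fin k → X)} (hA : MeasurableSet A) :
    (Measure.pi fun _ : Fin k => (empPM hN x : Measure X)).real A =
      𝔼 j : Fin k → Fin N, A.indicator 1 (x ∘ j) := by
  simp only [empPM, ProbabilityMeasure.coe_mk, measureReal_def, pi_empirical k hN,
    Measure.smul_apply, Measure.finsetSum_apply, Measure.dirac_apply' _ hA, smul_eq_mul,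
    ENNReal.toReal_mul, Fintype.expect_eq_sum_div_card]
  have hind (y : Fin k → X) :
      (A.indicator (1 : (Fin k → X) → ℝ≥0∞) y).toReal = A.indicator 1 y := by
    by_cases hy : y ∈ A <;> simp [hy]
  rw [ENNReal.toReal_sum fun j _ => by by_cases hy : x ∘ j ∈ A <;> simp [hy]]
  simp [hind, div_eq_inv_mul]

lemma continuous_empPM [TopologicalSpace X] [OpensMeasurableSpace X] {N : ℕ} (hN : 0 < N) :
    Continuous (empPM (X := X) hN) := by
  refine ProbabilityMeasure.continuous_iff_forall_continuous_lintegral.2 fun f => ?_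
  simp only [empPM, ProbabilityMeasure.coe_mk,
    lintegral_empirical _ f.continuous.measurable.coe_nnreal_ennreal]
  exact (ENNReal.continuous_const_mul (by simpa using hN.ne')).comp <|
    continuous_finsetSum _ fun i _ => ENNReal.continuous_coe.comp <|
      f.continuous.comp <| continuous_apply i

end

variable {X : Type*} [MeasurableSpace X] [TopologicalSpace X]

instance [OpensMeasurableSpace X] : BorelSpace (ProbabilityMeasure X) := ⟨rfl⟩

theorem measurable_toMeasure [BorelSpace X] [HasOuterApproxClosed X] :
    Measurable ((↑) : ProbabilityMeasure X → Measure X) := by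
  refine .measure_of_isPiSystem_of_isProbabilityMeasure
    (BorelSpace.measurable_eq.trans borel_eq_generateFrom_isClosed) isPiSystem_isClosed ?_
  intro F hF
  exact ENNReal.measurable_of_tendsto' atTop
    (fun n => (ProbabilityMeasure.continuous_lintegral_boundedContinuousFunction
      (IsClosed.apprSeq hF n)).measurable)
    (tendsto_pi_nhds.2 fun μ => HasOuterApproxClosed.tendsto_lintegral_apprSeq hF μ)

theorem integral_pi_map_empPM [BorelSpace X] [HasOuterApproxClosed X] [SecondCountableTopology X]
    {k N : ℕ} (hN : 0 < N) (γ : Measure (Fin N → X)) [IsFiniteMeasure γ] {A : Set (Fin k → X)}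
    (hA : MeasurableSet A) :
    ∫ ν, (Measure.pi fun _ : Fin k => (ν : Measure X)).real A ∂(γ.map (empPM hN)) =
      𝔼 j : Fin k → Fin N, γ.real ((fun x => x ∘ j) ⁻¹' A) := by
  have hmeas : Measurable fun ν : ProbabilityMeasure X =>
      (Measure.pi fun _ : Fin k => (ν : Measure X)).real A :=
    ((Measure.measurable_coe hA).comp
      (Measurable.measure_pi fun _ => measurable_toMeasure)).ennreal_toReal
  have hpre : ∀ j : Fin k → Fin N, MeasurableSet ((fun x : Fin N → X => x ∘ j) ⁻¹' A) :=
    fun j => measurable_pi_lambda _ (fun i => measurable_pi_apply _) hA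
  rw [integral_map (continuous_empPM hN).measurable.aemeasurable hmeas.aestronglyMeasurable]
  simp_rw [measureReal_pi_empPM hN _ hA, Fintype.expect_eq_sum_div_card]
  rw [integral_div, integral_finsetSum _ fun j _ => (integrable_const 1).indicator (hpre j)]
  congr! 2 with j
  exact integral_indicator_one (hpre j)

/-- Diaconis–Freedman bound recovered. For every `k ≥ 2` there is a
constant `B_k`, depending only on `k`, such that for every Polish space `X`, every `N ≥ k`
and every `N`-representable `k`-plan `μ_k`, there is a Borel probability measure `α` on
`𝒫(X)` with `‖μ_k − ∫ λ^{⊗k} dα(λ)‖_TV ≤ B_k/N` (TV distance as the supremum over Borel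
sets of the discrepancy). -/
theorem diaconis_freedman
    (k : ℕ) (hk : 2 ≤ k) :
    ∃ B : ℝ, ∀ (X : Type) [MeasurableSpace X] [TopologicalSpace X] [PolishSpace X]
      [BorelSpace X] (N : ℕ) (hkN : k ≤ N) (μk : Measure (Fin k → X)),
      μk ∈ NRep (X := X) hkN →
        ∃ α : Measure (ProbabilityMeasure X), IsProbabilityMeasure α ∧
          ∀ A : Set (Fin k → X), MeasurableSet A →
            |(μk A).toReal -
                ∫ lam : ProbabilityMeasure X,
                  ((Measure.pi fun _ : Fin k => (lam : Measure X)) A).toReal ∂α|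
              ≤ B / (N : ℝ) := by
  refine ⟨k * (k - 1), fun X _ _ _ _ N hkN μk ⟨γ, ⟨hγ, hsym⟩, hμk⟩ => ?_⟩
  have hN : 0 < N := by omega
  refine ⟨γ.map (empPM hN),
    Measure.isProbabilityMeasure_map (continuous_empPM hN).measurable.aemeasurable, fun A hA => ?_⟩
  rw [hsym] at hμk
  set t := fun j : Fin k → Fin N => γ.real ((fun x => x ∘ j) ⁻¹' A)
  set embeddings : Finset (Fin k → Fin N) := univ.image fun e : Fin k ↪ Fin N => ⇑e
  calc _ = |𝔼 j ∈ embeddings, t j - 𝔼 j, t j| := by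
        rw [← measureReal_def, hμk, measureReal_marginal_symmetrize hkN γ hA,
          ← integral_pi_map_empPM hN γ hA, expect_image DFunLike.coe_injective.injOn]
        rfl
    _ ≤ 1 - #embeddings / #(univ : Finset (Fin k → Fin N)) :=
        abs_expect_sub_expect_le_of_subset (subset_univ _) fun j _ =>
          ⟨measureReal_nonneg, measureReal_le_one⟩
    _ = 1 - N.descFactorial k / N ^ k := by
        rw [card_image_of_injective _ DFunLike.coe_injective, card_univ, card_univ,
          Fintype.card_embedding_eq, Fintype.card_fun]
        simp
    _ ≤ k * (k - 1) / N := Nat.one_sub_descFactorial_div_pow_le hkN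

end FiniteDeFinetti
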